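/- arXiv:math/0004142 — 2 statements merged into one kernel-verified Lean document; each statement's English description precedes it below -/
import Mathlib

section
/- Let K ⊆ ℤ^n be a subgroup and T ⊆ ℤ_{≥0}^n a set satisfying property (i) (if a, b ∈ ℤ_{≥0}^n with a − b ∈ ℤ_{≥0}^n and a ∈ T, then b ∈ T) and property (ii) (for T_q := {a ∈ T | a mod K = q}: for all g ∈ ℤ_{≥0}^n and q ∈ ℤ^n/K, either (g + T_q) ∩ T = ∅ or g + T_q ⊆ T). Then for every ℓ ⊆ {1,…,n} and every q ∈ ℤ^n/K: if T(ℓ)_q ≠ ∅ then T(ℓ)_q = T_q. In particular, T(ℓ) is a union of whole fibers T_q. -/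
open MvPolynomial

def vsupp {n : ℕ} (a : Fin n → ℕ) : Set (Fin n) := {i | a i ≠ 0}

def vcell {n : ℕ} (l : Set (Fin n)) : Set (Fin n → ℕ) := {a | vsupp a ⊆ l}

def vslice {n : ℕ} (r : Fin n → ℕ) (l : Set (Fin n)) : Set (Fin n → ℕ) :=
  (fun a => r + a) '' vcell l

def IsStdPair {n : ℕ} (T : Set (Fin n → ℕ)) (r : Fin n → ℕ) (l : Set (Fin n)) : Prop :=
  Disjoint (vsupp r) l ∧ vslice r l ⊆ T ∧
    ∀ (r' : Fin n → ℕ) (l' : Set (Fin n)), Disjoint (vsupp r') l' → vslice r' l' ⊆ T →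
      vslice r l ⊆ vslice r' l' → vslice r l = vslice r' l'

def DownClosed {n : ℕ} (T : Set (Fin n → ℕ)) : Prop :=
  ∀ a b : Fin n → ℕ, (∀ i, b i ≤ a i) → a ∈ T → b ∈ T

def vtoZ {n : ℕ} (a : Fin n → ℕ) : Fin n → ℤ := fun i => (a i : ℤ)

def fiber {n : ℕ} (K : AddSubgroup (Fin n → ℤ)) (S : Set (Fin n → ℕ))
    (q : (Fin n → ℤ) ⧸ K) : Set (Fin n → ℕ) :=
  {a ∈ S | (QuotientAddGroup.mk (vtoZ a) : (Fin n → ℤ) ⧸ K) = q}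

def PropII {n : ℕ} (K : AddSubgroup (Fin n → ℤ)) (T : Set (Fin n → ℕ)) : Prop :=
  ∀ (g : Fin n → ℕ) (q : (Fin n → ℤ) ⧸ K),
    ((fun a => g + a) '' fiber K T q) ∩ T = ∅ ∨ ((fun a => g + a) '' fiber K T q) ⊆ T

noncomputable def xmono {n : ℕ} (a : Fin n → ℕ) : MvPolynomial (Fin n) ℂ :=
  monomial (Finsupp.equivFunOnFinite.symm a) 1

def TofI {n : ℕ} (I : Ideal (MvPolynomial (Fin n) ℂ)) : Set (Fin n → ℕ) :=
  {a | xmono a ∉ I}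

def IsBinomialIdeal {n : ℕ} (I : Ideal (MvPolynomial (Fin n) ℂ)) : Prop :=
  ∃ S : Set (MvPolynomial (Fin n) ℂ), I = Ideal.span S ∧
    ∀ f ∈ S, ∃ (a b : Fin n → ℕ) (la lb : ℂ), f = la • xmono a - lb • xmono b

def KofI {n : ℕ} (I : Ideal (MvPolynomial (Fin n) ℂ)) : AddSubgroup (Fin n → ℤ) :=
  AddSubgroup.closure {v | ∃ a ∈ TofI I, ∃ b ∈ TofI I,
    (∃ la lb : ℂ, la ≠ 0 ∧ lb ≠ 0 ∧ la • xmono a - lb • xmono b ∈ I) ∧ v = vtoZ a - vtoZ b}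

def IsSaturated {n : ℕ} (I : Ideal (MvPolynomial (Fin n) ℂ)) : Prop :=
  IsBinomialIdeal I ∧ ∀ a ∈ TofI I, ∀ b ∈ TofI I, vtoZ a - vtoZ b ∈ KofI I →
    ∃ la lb : ℂ, la ≠ 0 ∧ lb ≠ 0 ∧ la • xmono a - lb • xmono b ∈ I

def Tl {n : ℕ} (T : Set (Fin n → ℕ)) (l : Set (Fin n)) : Set (Fin n → ℕ) :=
  {a | ∃ r, IsStdPair T r l ∧ a ∈ vslice r l}

def Tlbar {n : ℕ} (T : Set (Fin n → ℕ)) (l : Set (Fin n)) : Set (Fin n → ℕ) :=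
  {a | ∃ r r', (∀ i, r i ≤ r' i) ∧ IsStdPair T r' l ∧ a ∈ vslice r l}

def IsMonomialIdeal {n : ℕ} (I : Ideal (MvPolynomial (Fin n) ℂ)) : Prop :=
  ∃ S : Set (Fin n → ℕ), I = Ideal.span (xmono '' S)

def wdeg {n d : ℕ} (M : Matrix (Fin d) (Fin n) ℤ) (m : Fin n →₀ ℕ) : Fin d → ℤ :=
  M.mulVec fun i => (m i : ℤ)

noncomputable def homogComp {n d : ℕ} (M : Matrix (Fin d) (Fin n) ℤ) (q : Fin d → ℤ)
    (f : MvPolynomial (Fin n) ℂ) : MvPolynomial (Fin n) ℂ :=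
  ∑ m ∈ f.support, if wdeg M m = q then monomial m (f.coeff m) else 0

noncomputable def degPart {n d : ℕ} (M : Matrix (Fin d) (Fin n) ℤ)
    (I : Ideal (MvPolynomial (Fin n) ℂ)) (q : Fin d → ℤ) :
    Submodule ℂ (MvPolynomial (Fin n) ℂ ⧸ I) :=
  Submodule.span ℂ ((Ideal.Quotient.mk I) '' {f | ∀ m ∈ f.support, wdeg M m = q})

def IsAGraded {n d : ℕ} (M : Matrix (Fin d) (Fin n) ℤ)
    (I : Ideal (MvPolynomial (Fin n) ℂ)) : Prop :=
  (∀ f ∈ I, ∀ q : Fin d → ℤ, homogComp M q f ∈ I) ∧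
  ∀ q : Fin d → ℤ,
    (q ∈ Set.range (fun a : Fin n → ℕ => M.mulVec (vtoZ a)) →
      Module.finrank ℂ (degPart M I q) = 1) ∧
    (q ∉ Set.range (fun a : Fin n → ℕ => M.mulVec (vtoZ a)) →
      Module.finrank ℂ (degPart M I q) = 0)

noncomputable def htI {R : Type*} [CommRing R] (P : Ideal R) : ℕ∞ :=
  ⨆ (h : P.IsPrime), Order.height (⟨P, h⟩ : PrimeSpectrum R)

/-! For `a ∈ T` the only candidate standard pair containing `a` in direction `ℓ` is
`(π_ℓ a, ℓ)`, where `π_ℓ a` zeroes the coordinates in `ℓ`; so `a ∈ T(ℓ)` says that the slices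
`π_m a + ℤ_{≥0}^m` lie in `T` for `m = ℓ` and for no `m ⊋ ℓ`. Whether such a slice lies in `T`
depends only on the class of `a` mod `K`: a point of the slice through `b` is dominated by
`g + b`, where `g + a` is the corresponding point of the slice through `a`, and property (ii)
moves `g + a ∈ T` to `g + b ∈ T` across the fiber. -/

section Slices

variable {n : ℕ}

lemma mem_vslice {r a : Fin n → ℕ} {l : Set (Fin n)} :
    a ∈ vslice r l ↔ r ≤ a ∧ ∀ i ∉ l, a i = r i := by
  constructor
  · rintro ⟨c, hc, rfl⟩
    refine ⟨le_add_of_nonneg_right fun _ => Nat.zero_le _, fun i hi => ?_⟩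
    have : c i = 0 := not_ne_iff.mp fun h => hi (hc h)
    simp [this]
  · rintro ⟨hle, heq⟩
    refine ⟨a - r, fun i hi => ?_, by simpa using add_tsub_cancel_of_le hle⟩
    by_contra hl
    simp [vsupp, heq i hl] at hi

lemma self_mem_vslice (r : Fin n → ℕ) (l : Set (Fin n)) : r ∈ vslice r l :=
  mem_vslice.mpr ⟨le_rfl, fun _ _ => rfl⟩

lemma vslice_subset_vslice_iff {r r' : Fin n → ℕ} {l l' : Set (Fin n)} :
    vslice r l ⊆ vslice r' l' ↔ r ∈ vslice r' l' ∧ l ⊆ l' := by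
  constructor
  · intro h
    refine ⟨h (self_mem_vslice r l), fun i hi => ?_⟩
    by_contra hi'
    -- moving `r` along the direction `i ∈ l` leaves `vslice r' l'` unless `i ∈ l'`
    have hz : r + Pi.single i (r' i + 1) ∈ vslice r l := by
      refine mem_vslice.mpr ⟨le_add_of_nonneg_right fun _ => Nat.zero_le _, fun j hj => ?_⟩
      simp [show j ≠ i by rintro rfl; exact hj hi]
    have h₁ := (mem_vslice.mp (h hz)).2 i hi'
    have h₂ := (mem_vslice.mp (h (self_mem_vslice r l))).2 i hi'
    simp only [Pi.add_apply, Pi.single_eq_same] at h₁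
    omega
  · rintro ⟨hr, hll'⟩ z hz
    obtain ⟨hr'r, hr'⟩ := mem_vslice.mp hr
    obtain ⟨hrz, hrz'⟩ := mem_vslice.mp hz
    exact mem_vslice.mpr ⟨hr'r.trans hrz, fun i hi => (hrz' i fun h => hi (hll' h)).trans (hr' i hi)⟩

lemma mem_vslice_indicator_compl (a : Fin n → ℕ) (l : Set (Fin n)) :
    a ∈ vslice (lᶜ.indicator a) l :=
  mem_vslice.mpr ⟨Set.indicator_le_self _ _, fun _ hi => (Set.indicator_of_mem hi a).symm⟩

lemma disjoint_vsupp_indicator_compl (a : Fin n → ℕ) (l : Set (Fin n)) :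
    Disjoint (vsupp (lᶜ.indicator a)) l :=
  Set.disjoint_left.mpr fun _ hi hil => hi (Set.indicator_of_notMem (not_not_intro hil) a)

lemma eq_indicator_compl_of_mem_vslice {r a : Fin n → ℕ} {l : Set (Fin n)}
    (hd : Disjoint (vsupp r) l) (ha : a ∈ vslice r l) : r = lᶜ.indicator a := by
  funext i
  by_cases hi : i ∈ l
  · rw [Set.indicator_of_notMem (not_not_intro hi)]
    exact not_ne_iff.mp fun h => Set.disjoint_left.mp hd h hi
  · rw [Set.indicator_of_mem hi, (mem_vslice.mp ha).2 i hi]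

lemma vslice_indicator_compl_mono (a : Fin n → ℕ) {l l' : Set (Fin n)} (h : l ⊆ l') :
    vslice (lᶜ.indicator a) l ⊆ vslice (l'ᶜ.indicator a) l' := by
  refine vslice_subset_vslice_iff.mpr ⟨mem_vslice.mpr ⟨fun i => ?_, fun i hi => ?_⟩, h⟩
  · by_cases hi : i ∈ l'
    · simp [hi]
    · simp [hi, show i ∉ l from fun h' => hi (h h')]
  · simp [hi, show i ∉ l from fun h' => hi (h h')]

lemma mem_Tl_iff {T : Set (Fin n → ℕ)} {l : Set (Fin n)} {a : Fin n → ℕ} :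
    a ∈ Tl T l ↔ vslice (lᶜ.indicator a) l ⊆ T ∧
      ∀ l', l ⊆ l' → vslice (l'ᶜ.indicator a) l' ⊆ T → l' = l := by
  constructor
  · rintro ⟨r, ⟨hd, hT, hmax⟩, ha⟩
    obtain rfl := eq_indicator_compl_of_mem_vslice hd ha
    refine ⟨hT, fun l' hll' hT' => subset_antisymm ?_ hll'⟩
    have heq := hmax _ l' (disjoint_vsupp_indicator_compl a l') hT'
      (vslice_indicator_compl_mono a hll')
    exact (vslice_subset_vslice_iff.mp heq.ge).2
  · rintro ⟨hT, hmax⟩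
    refine ⟨lᶜ.indicator a, ⟨disjoint_vsupp_indicator_compl a l, hT, ?_⟩,
      mem_vslice_indicator_compl a l⟩
    intro r' l' hd' hT' hsub
    have hll' := (vslice_subset_vslice_iff.mp hsub).2
    obtain rfl := eq_indicator_compl_of_mem_vslice hd' (hsub (mem_vslice_indicator_compl a l))
    obtain rfl := hmax l' hll' hT'
    rfl

lemma Tl_subset (T : Set (Fin n → ℕ)) (l : Set (Fin n)) : Tl T l ⊆ T :=
  fun _ ⟨_, hstd, ha⟩ => hstd.2.1 ha

end Slices

section Fibers

variable {n : ℕ} {K : AddSubgroup (Fin n → ℤ)} {T : Set (Fin n → ℕ)}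

lemma PropII.add_mem (h2 : PropII K T) {g a b : Fin n → ℕ} (ha : a ∈ T) (hb : b ∈ T)
    (hab : (QuotientAddGroup.mk (vtoZ a) : (Fin n → ℤ) ⧸ K) = QuotientAddGroup.mk (vtoZ b))
    (hga : g + a ∈ T) : g + b ∈ T := by
  rcases h2 g (QuotientAddGroup.mk (vtoZ a)) with hempty | hsub
  · exact absurd hempty (Set.nonempty_iff_ne_empty.mp ⟨g + a, ⟨a, ⟨ha, rfl⟩, rfl⟩, hga⟩)
  · exact hsub ⟨b, ⟨hb, hab.symm⟩, rfl⟩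

lemma vslice_indicator_compl_subset_of_mk_eq (h1 : DownClosed T) (h2 : PropII K T)
    {a b : Fin n → ℕ} (ha : a ∈ T) (hb : b ∈ T)
    (hab : (QuotientAddGroup.mk (vtoZ a) : (Fin n → ℤ) ⧸ K) = QuotientAddGroup.mk (vtoZ b))
    (m : Set (Fin n)) (hsa : vslice (mᶜ.indicator a) m ⊆ T) :
    vslice (mᶜ.indicator b) m ⊆ T := by
  intro z hz
  obtain ⟨hbz, hbz'⟩ := mem_vslice.mp hz
  have hga : m.indicator z + a ∈ T := by
    refine hsa (mem_vslice.mpr ⟨fun i => ?_, fun i hi => ?_⟩)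
    · by_cases hi : i ∈ m <;> simp [hi]
    · simp [hi]
  refine h1 _ z (fun i => ?_) (h2.add_mem ha hb hab hga)
  by_cases hi : i ∈ m
  · simp [hi]
  · simpa [hi] using (hbz' i hi).le

lemma mem_Tl_of_mk_eq (h1 : DownClosed T) (h2 : PropII K T) {l : Set (Fin n)}
    {a b : Fin n → ℕ} (ha : a ∈ Tl T l) (hb : b ∈ T)
    (hab : (QuotientAddGroup.mk (vtoZ a) : (Fin n → ℤ) ⧸ K) = QuotientAddGroup.mk (vtoZ b)) :
    b ∈ Tl T l := by
  have haT := Tl_subset T l ha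
  obtain ⟨hT, hmax⟩ := mem_Tl_iff.mp ha
  exact mem_Tl_iff.mpr ⟨vslice_indicator_compl_subset_of_mk_eq h1 h2 haT hb hab l hT,
    fun l' hll' hT' =>
      hmax l' hll' (vslice_indicator_compl_subset_of_mk_eq h1 h2 hb haT hab.symm l' hT')⟩

end Fibers

/-- Under properties (i) and (ii), if T(ℓ)_q ≠ ∅ then T(ℓ)_q = T_q;
in particular T(ℓ) is a union of whole fibers. -/
theorem stmt_3 {n : ℕ} (K : AddSubgroup (Fin n → ℤ)) (T : Set (Fin n → ℕ))
    (h1 : DownClosed T) (h2 : PropII K T) (l : Set (Fin n)) :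
    (∀ q : (Fin n → ℤ) ⧸ K, (fiber K (Tl T l) q).Nonempty →
        fiber K (Tl T l) q = fiber K T q) ∧
      Tl T l = ⋃ q ∈ {q : (Fin n → ℤ) ⧸ K | (fiber K (Tl T l) q).Nonempty},
        fiber K T q := by
  have hfiber : ∀ q : (Fin n → ℤ) ⧸ K, (fiber K (Tl T l) q).Nonempty →
      fiber K (Tl T l) q = fiber K T q := by
    rintro q ⟨a, ha, rfl⟩
    exact subset_antisymm (fun b hb => ⟨Tl_subset T l hb.1, hb.2⟩)
      fun b hb => ⟨mem_Tl_of_mk_eq h1 h2 ha hb.1 hb.2.symm, hb.2⟩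
  refine ⟨hfiber, ?_⟩
  ext x
  simp only [Set.mem_iUnion, Set.mem_ofPred_eq, exists_prop]
  exact ⟨fun hx => ⟨_, ⟨x, hx, rfl⟩, Tl_subset T l hx, rfl⟩,
    fun ⟨q, hne, hxq⟩ => (hfiber q hne ▸ hxq).1⟩
end

section
/- Let A : ℤ^n → ℤ^d be a linear map with (ker A) ∩ ℤ_{≥0}^n = 0, let I ⊆ ℂ[x_1,…,x_n] be a monomial A-graded ideal, and T := T(I) = {a ∈ ℤ_{≥0}^n | x^a ∉ I}. Then: (1) for every ℓ with ℤ_{≥0}^ℓ ⊆ T, the vectors A(e_i) ∈ ℝ^d for i ∈ ℓ are linearly independent (so the cone A(ℝ_{≥0}^ℓ) is simplicial); (2) for any two subsets ℓ, m with ℤ_{≥0}^ℓ ⊆ T and ℤ_{≥0}^m ⊆ T, one has A(ℝ_{≥0}^ℓ) ∩ A(ℝ_{≥0}^m) = A(ℝ_{≥0}^{ℓ∩m}); (3) the union of the cones A(ℝ_{≥0}^ℓ) over all ℓ with (0, ℓ) ∈ B(T) equals A(ℝ_{≥0}^n). That is, the cones A(ℝ_{≥0}^ℓ) with ℤ_{≥0}^ℓ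 ⊆ T form a triangulation of the convex cone A(ℝ_{≥0}^n) ⊆ ℝ^d whose maximal cells come from the ℓ with (0, ℓ) ∈ B(T). -/
open MvPolynomial

/-- The cone A(ℝ_{≥0}^ℓ) ⊆ ℝ^d. -/
def realCone {n d : ℕ} (M : Matrix (Fin d) (Fin n) ℤ) (l : Set (Fin n)) :
    Set (Fin d → ℝ) :=
  {x | ∃ c : Fin n → ℝ, (∀ i, 0 ≤ c i) ∧ (∀ i ∉ l, c i = 0) ∧
    x = (M.map ((↑) : ℤ → ℝ)).mulVec c}


open Filter Topology

lemma mem_monomial_span_iff {n : ℕ} {S : Set (Fin n → ℕ)} {f : MvPolynomial (Fin n) ℂ} :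
    f ∈ Ideal.span (xmono '' S) ↔
      ∀ m ∈ f.support, ∃ s ∈ S, Finsupp.equivFunOnFinite.symm s ≤ m := by
  have himg : xmono '' S =
      (fun s => monomial s (1:ℂ)) '' (Finsupp.equivFunOnFinite.symm '' S) := by
    rw [Set.image_image]; rfl
  rw [himg, MvPolynomial.mem_ideal_span_monomial_image]
  constructor
  · intro h m hm
    obtain ⟨si, hsi, hle⟩ := h m hm
    obtain ⟨s, hs, rfl⟩ := hsi
    exact ⟨s, hs, hle⟩
  · intro h m hm
    obtain ⟨s, hs, hle⟩ := h m hm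
    exact ⟨_, Set.mem_image_of_mem _ hs, hle⟩

lemma xmono_mem_iff {n : ℕ} {S : Set (Fin n → ℕ)} {a : Fin n → ℕ} :
    xmono a ∈ Ideal.span (xmono '' S) ↔ ∃ s ∈ S, ∀ i, s i ≤ a i := by
  rw [mem_monomial_span_iff]
  have hsupp : (xmono a).support = {Finsupp.equivFunOnFinite.symm a} := by
    rw [xmono, support_monomial, if_neg one_ne_zero]
  simp only [hsupp, Finset.mem_singleton, forall_eq]
  constructor
  · rintro ⟨s, hs, hle⟩
    exact ⟨s, hs, fun i => by simpa using Finsupp.le_def.mp hle i⟩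
  · rintro ⟨s, hs, hle⟩
    exact ⟨s, hs, Finsupp.le_def.mpr fun i => by simpa using hle i⟩

lemma TofI_downClosed {n : ℕ} {I : Ideal (MvPolynomial (Fin n) ℂ)}
    (hmon : IsMonomialIdeal I) : DownClosed (TofI I) := by
  obtain ⟨S, rfl⟩ := hmon
  intro a b hle ha hb
  apply ha
  rw [xmono_mem_iff] at hb ⊢
  obtain ⟨s, hs, h⟩ := hb
  exact ⟨s, hs, fun i => (h i).trans (hle i)⟩

lemma wdeg_symm {n d : ℕ} (M : Matrix (Fin d) (Fin n) ℤ) (a : Fin n → ℕ) :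
    wdeg M (Finsupp.equivFunOnFinite.symm a) = M.mulVec (vtoZ a) := by
  unfold wdeg vtoZ
  congr 1

lemma mk_xmono_mem_degPart {n d : ℕ} (M : Matrix (Fin d) (Fin n) ℤ)
    (I : Ideal (MvPolynomial (Fin n) ℂ)) (a : Fin n → ℕ) :
    Ideal.Quotient.mk I (xmono a) ∈ degPart M I (M.mulVec (vtoZ a)) := by
  apply Submodule.subset_span
  refine ⟨xmono a, ?_, rfl⟩
  intro m hm
  have hsupp : (xmono a).support = {Finsupp.equivFunOnFinite.symm a} := by
    rw [xmono, support_monomial, if_neg one_ne_zero]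
  rw [hsupp, Finset.mem_singleton] at hm
  rw [hm, wdeg_symm]

set_option synthInstance.maxHeartbeats 1000000 in
set_option maxHeartbeats 2000000 in
lemma A_injOn_T {n d : ℕ} (M : Matrix (Fin d) (Fin n) ℤ)
    {I : Ideal (MvPolynomial (Fin n) ℂ)} (hmon : IsMonomialIdeal I) (hI : IsAGraded M I)
    {a b : Fin n → ℕ} (ha : a ∈ TofI I) (hb : b ∈ TofI I)
    (hab : M.mulVec (vtoZ a) = M.mulVec (vtoZ b)) : a = b := by
  by_contra hne
  set q := M.mulVec (vtoZ a) with hqdef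
  have h1 : Module.finrank ℂ (degPart M I q) = 1 := (hI.2 q).1 ⟨a, rfl⟩
  rw [finrank_eq_one_iff'] at h1
  obtain ⟨v, hv0, hv⟩ := h1
  have hma : Ideal.Quotient.mk I (xmono a) ∈ degPart M I q := mk_xmono_mem_degPart M I a
  have hmb : Ideal.Quotient.mk I (xmono b) ∈ degPart M I q := by
    have := mk_xmono_mem_degPart M I b
    rwa [← hab] at this
  obtain ⟨ca, hca⟩ := hv ⟨_, hma⟩
  obtain ⟨cb, hcb⟩ := hv ⟨_, hmb⟩
  have hcane : Ideal.Quotient.mk I (xmono a) = ca • (v : MvPolynomial (Fin n) ℂ ⧸ I) := by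
    have := congrArg (Subtype.val) hca
    simpa using this.symm
  have hcbne : Ideal.Quotient.mk I (xmono b) = cb • (v : MvPolynomial (Fin n) ℂ ⧸ I) := by
    have := congrArg (Subtype.val) hcb
    simpa using this.symm
  have hcb0 : cb ≠ 0 := by
    intro h
    rw [h, zero_smul] at hcbne
    exact hb (Ideal.Quotient.eq_zero_iff_mem.mp hcbne)
  have hmk : ∀ (c : ℂ) (f : MvPolynomial (Fin n) ℂ),
      Ideal.Quotient.mk I (C c * f) = c • Ideal.Quotient.mk I f := by
    intro c f
    rw [map_mul, ← MvPolynomial.algebraMap_eq, Ideal.Quotient.mk_algebraMap,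
      ← Algebra.smul_def]
  have hrel : Ideal.Quotient.mk I (C cb * xmono a - C ca * xmono b) = 0 := by
    rw [map_sub, hmk, hmk, hcane, hcbne, smul_smul, smul_smul, mul_comm, sub_self]
  have hmem : C cb * xmono a - C ca * xmono b ∈ I := Ideal.Quotient.eq_zero_iff_mem.mp hrel
  obtain ⟨S, rfl⟩ := hmon
  have hcoeff : (C cb * xmono a - C ca * xmono b).coeff (Finsupp.equivFunOnFinite.symm a) = cb := by
    have hne' : Finsupp.equivFunOnFinite.symm b ≠ Finsupp.equivFunOnFinite.symm a := by
      intro h; exact hne (Finsupp.equivFunOnFinite.symm.injective h).symm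
    rw [xmono, xmono, C_mul_monomial, C_mul_monomial, mul_one, mul_one, coeff_sub,
      coeff_monomial, coeff_monomial, if_pos rfl, if_neg hne', sub_zero]
  have hsuppmem : Finsupp.equivFunOnFinite.symm a ∈ (C cb * xmono a - C ca * xmono b).support := by
    rw [mem_support_iff, hcoeff]; exact hcb0
  obtain ⟨s, hs, hle⟩ := mem_monomial_span_iff.mp hmem _ hsuppmem
  apply ha
  rw [xmono_mem_iff]
  exact ⟨s, hs, fun i => by simpa using Finsupp.le_def.mp hle i⟩

lemma exists_T_rep {n d : ℕ} (M : Matrix (Fin d) (Fin n) ℤ)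
    {I : Ideal (MvPolynomial (Fin n) ℂ)} (hmon : IsMonomialIdeal I) (hI : IsAGraded M I)
    (a : Fin n → ℕ) : ∃ b ∈ TofI I, M.mulVec (vtoZ b) = M.mulVec (vtoZ a) := by
  set q := M.mulVec (vtoZ a) with hqdef
  have h1 : Module.finrank ℂ (degPart M I q) = 1 := (hI.2 q).1 ⟨a, rfl⟩
  have hne : degPart M I q ≠ ⊥ := by
    intro h
    rw [h] at h1
    simp at h1
  have : ∃ f : MvPolynomial (Fin n) ℂ, (∀ m ∈ f.support, wdeg M m = q) ∧
      Ideal.Quotient.mk I f ≠ 0 := by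
    by_contra hno
    push_neg at hno
    apply hne
    rw [degPart, Submodule.span_eq_bot]
    rintro x ⟨f, hf, rfl⟩
    exact hno f hf
  obtain ⟨f, hdeg, hf0⟩ := this
  have hfI : f ∉ I := fun h => hf0 (Ideal.Quotient.eq_zero_iff_mem.mpr h)
  have : ∃ m ∈ f.support, xmono (⇑m) ∉ I := by
    by_contra hno
    push_neg at hno
    apply hfI
    rw [f.as_sum]
    apply Ideal.sum_mem
    intro m hm
    have : monomial m (coeff m f) = C (coeff m f) * xmono (⇑m) := by
      rw [xmono, Finsupp.equivFunOnFinite_symm_coe, C_mul_monomial, mul_one]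
    rw [this]
    exact Ideal.mul_mem_left _ _ (hno m hm)
  obtain ⟨m, hm, hmI⟩ := this
  refine ⟨⇑m, hmI, ?_⟩
  show M.mulVec (vtoZ ⇑m) = q
  rw [← hdeg m hm]
  rfl

lemma rat_span {ι J : Type*} [Fintype ι] [Fintype J] (B : Matrix J ι ℚ) (x : ι → ℝ)
    (hx : ∀ j, ∑ i, (B j i : ℝ) * x i = 0) :
    x ∈ Submodule.span ℝ ((fun q : ι → ℚ => fun i => ((q i : ℝ))) '' {q | ∀ j, ∑ i, B j i * q i = 0}) := by
  classical
  set bR : Module.Basis (Module.Free.ChooseBasisIndex ℚ ℝ) ℚ ℝ := Module.Free.chooseBasis ℚ ℝ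
  set r : ι → (Module.Free.ChooseBasisIndex ℚ ℝ →₀ ℚ) := fun i => bR.repr (x i) with hr
  set s : Finset (Module.Free.ChooseBasisIndex ℚ ℝ) :=
    Finset.univ.biUnion (fun i => (r i).support) with hs
  have hclaim1 : ∀ α, (∀ j, ∑ i, B j i * r i α = 0) := by
    intro α j
    have h0 : bR.repr (∑ i, (B j i : ℝ) * x i) = 0 := by rw [hx j, map_zero]
    have h1 : bR.repr (∑ i, (B j i : ℝ) * x i) = ∑ i, B j i • bR.repr (x i) := by
      rw [map_sum]
      congr 1
      funext i
      rw [show (B j i : ℝ) * x i = B j i • x i from (Rat.smul_def _ _).symm, map_smul]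
    have := h1 ▸ h0
    have h2 := congrArg (fun v => v α) this
    simpa [Finsupp.finset_sum_apply] using h2
  have hclaim2 : x = ∑ α ∈ s, bR α • (fun i => ((r i α : ℝ))) := by
    funext i
    rw [Finset.sum_apply]
    have hrepr : ((r i).sum fun α c => c • bR α) = x i := by
      rw [hr]; exact bR.linearCombination_repr (x i)
    have hsub : (r i).support ⊆ s := by
      intro α hα
      exact Finset.mem_biUnion.mpr ⟨i, Finset.mem_univ i, hα⟩
    rw [← hrepr, Finsupp.sum]
    rw [Finset.sum_subset hsub (by intro α _ hα; rw [Finsupp.notMem_support_iff.mp hα, zero_smul])]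
    congr 1
    funext α
    rw [Pi.smul_apply, Rat.smul_def, smul_eq_mul, mul_comm]
  rw [hclaim2]
  apply Submodule.sum_mem
  intro α _
  apply Submodule.smul_mem
  apply Submodule.subset_span
  exact ⟨fun i => r i α, hclaim1 α, rfl⟩

lemma rat_dense {ι J : Type*} [Fintype ι] [Fintype J] (B : Matrix J ι ℚ) (x : ι → ℝ)
    (hx : ∀ j, ∑ i, (B j i : ℝ) * x i = 0) {ε : ℝ} (hε : 0 < ε) :
    ∃ q : ι → ℚ, (∀ j, ∑ i, B j i * q i = 0) ∧ ∀ i, |(q i : ℝ) - x i| < ε := by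
  classical
  have hs := rat_span B x hx
  rw [Submodule.mem_span_set] at hs
  obtain ⟨c, hcsup, hcsum⟩ := hs
  -- c : (ι → ℝ) →₀ ℝ with support in image
  -- pick rational preimages
  have hpre : ∀ y ∈ c.support, ∃ q : ι → ℚ, (∀ j, ∑ i, B j i * q i = 0) ∧
      (fun i => ((q i : ℝ))) = y := by
    intro y hy
    have := hcsup hy
    obtain ⟨q, hq, rfl⟩ := this
    exact ⟨q, hq, rfl⟩
  choose qf hqf1 hqf2 using hpre
  set D : ℝ := (∑ y ∈ c.support.attach, ∑ i, |((qf y y.2) i : ℝ)|) + 1 with hD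
  have hD0 : 0 < D := by
    have : (0:ℝ) ≤ ∑ y ∈ c.support.attach, ∑ i, |((qf y y.2) i : ℝ)| :=
      Finset.sum_nonneg fun y _ => Finset.sum_nonneg fun i _ => abs_nonneg _
    linarith
  have hδ : 0 < ε / D := div_pos hε hD0
  have hrat : ∀ y : {y // y ∈ c.support}, ∃ t : ℚ, |c y.1 - (t:ℝ)| < ε / D :=
    fun y => exists_rat_near (c y.1) hδ
  choose t ht using hrat
  refine ⟨∑ y ∈ c.support.attach, t y • qf y y.2, ?_, ?_⟩
  · intro j
    have happ : ∀ i, (∑ y ∈ c.support.attach, t y • qf y y.2) i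
        = ∑ y ∈ c.support.attach, t y * qf y y.2 i := by
      intro i; rw [Finset.sum_apply]; rfl
    calc ∑ i, B j i * (∑ y ∈ c.support.attach, t y • qf y y.2) i
        = ∑ i, ∑ y ∈ c.support.attach, B j i * (t y * qf y y.2 i) := by
          refine Finset.sum_congr rfl fun i _ => ?_
          rw [happ, Finset.mul_sum]
      _ = ∑ y ∈ c.support.attach, ∑ i, B j i * (t y * qf y y.2 i) := Finset.sum_comm
      _ = 0 := by
          refine Finset.sum_eq_zero fun y _ => ?_
          have h2 : ∑ i, B j i * (t y * qf y y.2 i) = t y * ∑ i, B j i * qf y y.2 i := by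
            rw [Finset.mul_sum]
            refine Finset.sum_congr rfl fun i _ => by ring
          rw [h2, hqf1, mul_zero]
  · intro i
    have hxi : x i = ∑ y ∈ c.support.attach, c y.1 * ((qf y y.2 i : ℝ)) := by
      rw [← hcsum]
      have : (c.sum fun mi r => r • mi) i = ∑ y ∈ c.support, c y * y i := by
        rw [Finsupp.sum, Finset.sum_apply]
        refine Finset.sum_congr rfl fun y _ => ?_
        rw [Pi.smul_apply, smul_eq_mul]
      rw [this, ← Finset.sum_attach c.support (fun y => c y * y i)]
      refine Finset.sum_congr rfl fun y _ => ?_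
      rw [congrFun (hqf2 y.1 y.2) i]
    have hqi : ((∑ y ∈ c.support.attach, t y • qf y y.2) i : ℝ)
        = ∑ y ∈ c.support.attach, (t y : ℝ) * ((qf y y.2 i : ℝ)) := by
      rw [Finset.sum_apply]
      simp only [Pi.smul_apply, smul_eq_mul]
      push_cast
      rfl
    rw [hqi, hxi, ← Finset.sum_sub_distrib]
    have hb1 : ∀ y ∈ c.support.attach,
        |(t y : ℝ) * (qf y y.2 i : ℝ) - c y.1 * (qf y y.2 i : ℝ)|
          ≤ (ε / D) * |(qf y y.2 i : ℝ)| := by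
      intro y _
      rw [← sub_mul, abs_mul]
      apply mul_le_mul_of_nonneg_right _ (abs_nonneg _)
      rw [abs_sub_comm]
      exact le_of_lt (ht y)
    calc |∑ y ∈ c.support.attach, ((t y : ℝ) * (qf y y.2 i : ℝ) - c y.1 * (qf y y.2 i : ℝ))|
        ≤ ∑ y ∈ c.support.attach, |(t y : ℝ) * (qf y y.2 i : ℝ) - c y.1 * (qf y y.2 i : ℝ)| :=
          Finset.abs_sum_le_sum_abs _ _
      _ ≤ ∑ y ∈ c.support.attach, (ε / D) * |(qf y y.2 i : ℝ)| := Finset.sum_le_sum hb1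
      _ = (ε / D) * ∑ y ∈ c.support.attach, |(qf y y.2 i : ℝ)| := by rw [Finset.mul_sum]
      _ ≤ (ε / D) * (D - 1) := by
          apply mul_le_mul_of_nonneg_left _ (le_of_lt hδ)
          have : ∑ y ∈ c.support.attach, |(qf y y.2 i : ℝ)|
              ≤ ∑ y ∈ c.support.attach, ∑ i', |(qf y y.2 i' : ℝ)| := by
            refine Finset.sum_le_sum fun y _ => ?_
            exact Finset.single_le_sum (f := fun i' => |(qf y.1 y.2 i' : ℝ)|)
              (fun i' _ => abs_nonneg _) (Finset.mem_univ i)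
          rw [hD]
          linarith
      _ < ε := by
          have h2 : (ε / D) * (D - 1) = ε - ε / D := by
            field_simp
          rw [h2]
          linarith

lemma exists_int_scale {ι : Type*} [Fintype ι] (q : ι → ℚ) :
    ∃ D : ℕ, 0 < D ∧ ∃ z : ι → ℤ, ∀ u, (z u : ℚ) = D * q u := by
  classical
  refine ⟨∏ u, (q u).den, Finset.prod_pos (fun u _ => (q u).pos), ?_⟩
  refine ⟨fun u => (q u).num * ∏ u' ∈ Finset.univ.erase u, ((q u').den : ℤ), ?_⟩
  intro u
  push_cast
  rw [← Finset.mul_prod_erase Finset.univ (fun u' => ((q u').den : ℚ)) (Finset.mem_univ u),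
    ← Rat.mul_den_eq_num (q u)]
  ring

lemma exists_pos_min {ι : Type*} [Fintype ι] (c : ι → ℝ) (hc : ∀ i, 0 ≤ c i) :
    ∃ ε > 0, ∀ i, c i ≠ 0 → ε ≤ c i := by
  classical
  by_cases h : ∀ i, c i = 0
  · exact ⟨1, one_pos, fun i hi => absurd (h i) hi⟩
  · push_neg at h
    set F := Finset.univ.filter (fun i => c i ≠ 0) with hF
    have hne : F.Nonempty := by
      obtain ⟨i, hi⟩ := h
      exact ⟨i, by simp [hF, hi]⟩
    refine ⟨F.inf' hne c, ?_, fun i hi => Finset.inf'_le c (by simp [hF, hi])⟩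
    show (0:ℝ) < F.inf' hne c
    rw [Finset.lt_inf'_iff]
    intro i hi
    have hi' : c i ≠ 0 := by simpa [hF] using hi
    exact lt_of_le_of_ne (hc i) (Ne.symm hi')

lemma real_pointed {n d : ℕ} (M : Matrix (Fin d) (Fin n) ℤ)
    (hker : ∀ a : Fin n → ℕ, M.mulVec (vtoZ a) = 0 → a = 0)
    (c : Fin n → ℝ) (hc : ∀ i, 0 ≤ c i)
    (hAc : (M.map ((↑) : ℤ → ℝ)).mulVec c = 0) : c = 0 := by
  classical
  by_contra hc0
  have hex : ∃ i, c i ≠ 0 := by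
    by_contra h
    push_neg at h
    exact hc0 (funext h)
  obtain ⟨i0, hi0⟩ := hex
  obtain ⟨ε, hε, hεle⟩ := exists_pos_min c hc
  set B : Matrix (Fin d ⊕ Fin n) (Fin n) ℚ := fun j i =>
    Sum.casesOn j (fun j' => ((M j' i : ℚ))) (fun t => if c t = 0 ∧ i = t then 1 else 0)
    with hB
  have hx : ∀ j, ∑ i, (B j i : ℝ) * c i = 0 := by
    rintro (j | t)
    · have := congrFun hAc j
      rw [Matrix.mulVec, dotProduct] at this
      simp only [Pi.zero_apply] at this
      rw [← this]
      refine Finset.sum_congr rfl fun i _ => ?_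
      simp [hB, Matrix.map_apply]
    · by_cases h : c t = 0
      · have heq : ∀ i, (B (Sum.inr t) i : ℝ) * c i = if i = t then c i else 0 := by
          intro i
          by_cases hit : i = t <;> simp [hB, h, hit]
        rw [Finset.sum_congr rfl fun i _ => heq i, Finset.sum_ite_eq' Finset.univ t c]
        simp [h]
      · have heq : ∀ i, (B (Sum.inr t) i : ℝ) * c i = 0 := by
          intro i
          simp [hB, h]
        rw [Finset.sum_congr rfl fun i _ => heq i]
        simp
  obtain ⟨q, hq1, hq2⟩ := rat_dense B c hx hε
  -- q vanishes where c vanishes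
  have hqz : ∀ t, c t = 0 → q t = 0 := by
    intro t ht
    have h0 := hq1 (Sum.inr t)
    have heq : ∀ i, B (Sum.inr t) i * q i = if i = t then q i else 0 := by
      intro i
      by_cases hit : i = t <;> simp [hB, ht, hit]
    rw [Finset.sum_congr rfl fun i _ => heq i, Finset.sum_ite_eq' Finset.univ t q] at h0
    simpa using h0
  -- q nonneg
  have hqnn : ∀ i, 0 ≤ q i := by
    intro i
    by_cases h : c i = 0
    · rw [hqz i h]
    · have h1 := hq2 i
      have h2 := hεle i h
      rw [abs_lt] at h1
      have : (0:ℝ) < (q i : ℝ) := by linarith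
      exact_mod_cast le_of_lt this
  have hqpos : 0 < q i0 := by
    have h1 := hq2 i0
    have h2 := hεle i0 hi0
    rw [abs_lt] at h1
    have : (0:ℝ) < (q i0 : ℝ) := by linarith
    exact_mod_cast this
  obtain ⟨D, hD, z, hz⟩ := exists_int_scale q
  have hznn : ∀ u, 0 ≤ z u := by
    intro u
    have : (0:ℚ) ≤ (z u : ℚ) := by
      rw [hz]
      exact mul_nonneg (by positivity) (hqnn u)
    exact_mod_cast this
  set a : Fin n → ℕ := fun u => (z u).toNat with ha
  have hza : vtoZ a = z := by
    funext u
    simp [ha, vtoZ, Int.toNat_of_nonneg (hznn u)]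
  have hAz : M.mulVec (vtoZ a) = 0 := by
    rw [hza]
    funext j
    rw [Matrix.mulVec, dotProduct]
    have : ((∑ i, M j i * z i : ℤ) : ℚ) = 0 := by
      push_cast
      have : ∀ i, (M j i : ℚ) * (z i : ℚ) = (D : ℚ) * (B (Sum.inl j) i * q i) := by
        intro i
        rw [hz]
        simp [hB]
        ring
      rw [Finset.sum_congr rfl fun i _ => this i, ← Finset.mul_sum, hq1 (Sum.inl j), mul_zero]
    exact_mod_cast this
  have := hker a hAz
  have hz0 : z i0 = 0 := by
    rw [← hza]
    simp [vtoZ, this]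
  have : (D : ℚ) * q i0 = 0 := by rw [← hz, hz0]; simp
  have hD0 : (D : ℚ) ≠ 0 := by exact_mod_cast hD.ne'
  have : q i0 = 0 := by
    rcases mul_eq_zero.mp this with h | h
    · exact absurd h hD0
    · exact h
  rw [this] at hqpos
  exact absurd hqpos (lt_irrefl 0)

lemma int_kernel_of_rat {n d : ℕ} (M : Matrix (Fin d) (Fin n) ℤ) (q : Fin n → ℚ) (D : ℕ)
    (z : Fin n → ℤ) (hz : ∀ u, (z u : ℚ) = D * q u)
    (hq : ∀ j, ∑ i, (M j i : ℚ) * q i = 0) : M.mulVec z = 0 := by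
  funext j
  rw [Matrix.mulVec, dotProduct]
  have : ((∑ i, M j i * z i : ℤ) : ℚ) = 0 := by
    push_cast
    have heq : ∀ i, (M j i : ℚ) * (z i : ℚ) = (D : ℚ) * ((M j i : ℚ) * q i) := by
      intro i
      rw [hz]
      ring
    rw [Finset.sum_congr rfl fun i _ => heq i, ← Finset.mul_sum, hq j, mul_zero]
  exact_mod_cast this

lemma sum_eq_subtype_sum {n : ℕ} (l : Set (Fin n)) [Fintype l] (F : Fin n → ℝ)
    (hF : ∀ i, i ∉ l → F i = 0) : ∑ i, F i = ∑ i : l, F i := by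
  classical
  rw [← Finset.sum_filter_of_ne (p := (· ∈ l)) (fun i _ h => by
    by_contra hmem
    exact h (hF i hmem))]
  rw [Finset.sum_subtype (p := (· ∈ l)) (Finset.univ.filter (· ∈ l)) (fun i => by simp) F]

lemma part1 {n d : ℕ} (M : Matrix (Fin d) (Fin n) ℤ)
    {I : Ideal (MvPolynomial (Fin n) ℂ)} (hmon : IsMonomialIdeal I) (hI : IsAGraded M I)
    (l : Set (Fin n)) (hl : vcell l ⊆ TofI I) :
    LinearIndependent ℝ (fun i : l => fun j : Fin d => (M j (i:Fin n) : ℝ)) := by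
  classical
  haveI : Fintype l := Fintype.ofFinite _
  rw [Fintype.linearIndependent_iff]
  intro g hg
  set c : Fin n → ℝ := fun i => if h : i ∈ l then g ⟨i, h⟩ else 0 with hcdef
  set B : Matrix (Fin d ⊕ Fin n) (Fin n) ℚ := fun j i =>
    Sum.casesOn j (fun j' => ((M j' i : ℚ))) (fun t => if t ∉ l ∧ i = t then 1 else 0)
    with hB
  have hczero : ∀ i, i ∉ l → c i = 0 := by
    intro i hi
    simp [hcdef, hi]
  have hx : ∀ j, ∑ i, (B j i : ℝ) * c i = 0 := by
    rintro (j | t)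
    · have h1 : ∑ i, (B (Sum.inl j) i : ℝ) * c i = ∑ i : l, (M j (i : Fin n) : ℝ) * c i := by
        rw [sum_eq_subtype_sum l (fun i => (B (Sum.inl j) i : ℝ) * c i)
          (fun i hi => by show (B (Sum.inl j) i : ℝ) * c i = 0; rw [hczero i hi, mul_zero])]
        refine Finset.sum_congr rfl fun i _ => ?_
        show (B (Sum.inl j) (i : Fin n) : ℝ) * c (i : Fin n) = _
        simp [hB]
      rw [h1]
      have h2 := congrFun hg j
      rw [Finset.sum_apply] at h2
      simp only [Pi.zero_apply] at h2
      rw [← h2]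
      refine Finset.sum_congr rfl fun i _ => ?_
      rw [Pi.smul_apply, smul_eq_mul]
      have : c (i : Fin n) = g i := by simp [hcdef, i.2]
      rw [this, mul_comm]
    · by_cases ht : t ∈ l
      · have heq : ∀ i, (B (Sum.inr t) i : ℝ) * c i = 0 := fun i => by simp [hB, ht]
        rw [Finset.sum_congr rfl fun i _ => heq i]
        simp
      · have heq : ∀ i, (B (Sum.inr t) i : ℝ) * c i = if i = t then c i else 0 := by
          intro i
          by_cases hit : i = t <;> simp [hB, ht, hit]
        rw [Finset.sum_congr rfl fun i _ => heq i, Finset.sum_ite_eq' Finset.univ t c]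
        simp [hczero t ht]
  -- every rational solution is zero
  have hqzero : ∀ q : Fin n → ℚ, (∀ j, ∑ i, B j i * q i = 0) → q = 0 := by
    intro q hq
    obtain ⟨D, hD, z, hz⟩ := exists_int_scale q
    have hzt : ∀ t, t ∉ l → z t = 0 := by
      intro t ht
      have h0 := hq (Sum.inr t)
      have heq : ∀ i, B (Sum.inr t) i * q i = if i = t then q i else 0 := by
        intro i
        by_cases hit : i = t <;> simp [hB, ht, hit]
      rw [Finset.sum_congr rfl fun i _ => heq i, Finset.sum_ite_eq' Finset.univ t q] at h0
      simp only [Finset.mem_univ, if_true] at h0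
      have : (z t : ℚ) = 0 := by rw [hz, h0, mul_zero]
      exact_mod_cast this
    have hAz : M.mulVec z = 0 :=
      int_kernel_of_rat M q D z hz (fun j => by
        have := hq (Sum.inl j)
        refine Eq.trans ?_ this
        refine (Finset.sum_congr rfl fun i _ => ?_).symm
        simp [hB])
    set aa : Fin n → ℕ := fun u => (z u).toNat with haa
    set bb : Fin n → ℕ := fun u => (-z u).toNat with hbb
    have hzab : vtoZ aa - vtoZ bb = z := by
      funext u
      simp only [Pi.sub_apply, vtoZ, haa, hbb]
      omega
    have haal : aa ∈ vcell l := by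
      intro u hu
      by_contra hul
      have := hzt u hul
      simp only [vsupp, Set.mem_setOf_eq, haa] at hu
      omega
    have hbbl : bb ∈ vcell l := by
      intro u hu
      by_contra hul
      have := hzt u hul
      simp only [vsupp, Set.mem_setOf_eq, hbb] at hu
      omega
    have hAB : M.mulVec (vtoZ aa) = M.mulVec (vtoZ bb) := by
      have : M.mulVec (vtoZ aa - vtoZ bb) = 0 := by rw [hzab]; exact hAz
      rw [Matrix.mulVec_sub] at this
      exact sub_eq_zero.mp this
    have := A_injOn_T M hmon hI (hl haal) (hl hbbl) hAB
    have hz0 : z = 0 := by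
      rw [← hzab, this]
      simp
    funext u
    have : (z u : ℚ) = 0 := by rw [hz0]; simp
    rw [hz] at this
    have hD0 : (D : ℚ) ≠ 0 := by exact_mod_cast hD.ne'
    simpa [hD0] using this
  -- hence c = 0
  have hc0 : c = 0 := by
    have hsp := rat_span B c hx
    have himg : (fun q : Fin n → ℚ => fun i => ((q i : ℝ))) ''
        {q | ∀ j, ∑ i, B j i * q i = 0} ⊆ {0} := by
      rintro y ⟨q, hq, rfl⟩
      have := hqzero q hq
      simp only [Set.mem_singleton_iff, this]
      funext i
      simp
    have := Submodule.span_le.mpr (himg.trans (by simp : ({0} : Set (Fin n → ℝ)) ⊆ (⊥ : Submodule ℝ (Fin n → ℝ))))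
    have := this hsp
    simpa using this
  intro i
  have : c (i : Fin n) = g i := by simp [hcdef, i.2]
  rw [← this, hc0]
  rfl

lemma part2 {n d : ℕ} (M : Matrix (Fin d) (Fin n) ℤ)
    {I : Ideal (MvPolynomial (Fin n) ℂ)} (hmon : IsMonomialIdeal I) (hI : IsAGraded M I)
    (l m : Set (Fin n)) (hl : vcell l ⊆ TofI I) (hm : vcell m ⊆ TofI I) :
    realCone M l ∩ realCone M m = realCone M (l ∩ m) := by
  classical
  apply Set.Subset.antisymm
  · rintro x ⟨⟨c, hc0, hcl, hxc⟩, ⟨c', hc0', hcm, hxc'⟩⟩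
    set X : Fin n ⊕ Fin n → ℝ := Sum.elim c c' with hX
    have hX0 : ∀ u, 0 ≤ X u := by rintro (i | i) <;> simp [hX, hc0 i, hc0' i]
    set B : Matrix (Fin d ⊕ (Fin n ⊕ Fin n)) (Fin n ⊕ Fin n) ℚ := fun j =>
      Sum.casesOn j
        (fun j' => Sum.elim (fun i => ((M j' i : ℚ))) (fun i => -((M j' i : ℚ))))
        (fun t u => if X t = 0 ∧ u = t then 1 else 0)
      with hB
    have hrow : ∀ j : Fin d, ∑ u, (B (Sum.inl j) u : ℝ) * X u = 0 := by
      intro j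
      rw [Fintype.sum_sum_type]
      have e1 : ∀ i : Fin n, (B (Sum.inl j) (Sum.inl i) : ℝ) * X (Sum.inl i)
          = (M j i : ℝ) * c i := by intro i; simp [hB, hX]
      have e2 : ∀ i : Fin n, (B (Sum.inl j) (Sum.inr i) : ℝ) * X (Sum.inr i)
          = -((M j i : ℝ) * c' i) := by
        intro i
        simp only [hB, hX, Sum.elim_inr]
        push_cast
        ring
      rw [Finset.sum_congr rfl fun i _ => e1 i, Finset.sum_congr rfl fun i _ => e2 i]
      have hxj : ∀ (cc : Fin n → ℝ), ((M.map ((↑) : ℤ → ℝ)).mulVec cc) j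
          = ∑ i, (M j i : ℝ) * cc i := by
        intro cc
        rw [Matrix.mulVec, dotProduct]
        refine Finset.sum_congr rfl fun i _ => ?_
        rw [Matrix.map_apply]
      have h1 : ∑ i, (M j i : ℝ) * c i = x j := by rw [← hxj, ← hxc]
      have h2 : ∑ i, (M j i : ℝ) * c' i = x j := by rw [← hxj, ← hxc']
      rw [Finset.sum_neg_distrib, h1, h2]
      ring
    have hx : ∀ j, ∑ u, (B j u : ℝ) * X u = 0 := by
      rintro (j | t)
      · exact hrow j
      · by_cases h : X t = 0
        · have heq : ∀ u, (B (Sum.inr t) u : ℝ) * X u = if u = t then X u else 0 := by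
            intro u
            by_cases hut : u = t <;> simp [hB, h, hut]
          rw [Finset.sum_congr rfl fun u _ => heq u, Finset.sum_ite_eq' Finset.univ t X]
          simp [h]
        · have heq : ∀ u, (B (Sum.inr t) u : ℝ) * X u = 0 := by
            intro u
            simp [hB, h]
          rw [Finset.sum_congr rfl fun u _ => heq u]
          simp
    -- main claim: c = c'
    have hcc : c = c' := by
      funext i
      have key : ∀ δ : ℝ, 0 < δ → |c i - c' i| ≤ 0 + δ := by
        intro δ hδ
        obtain ⟨ε0, hε0, hε0le⟩ := exists_pos_min X hX0
        set ε' : ℝ := min ε0 (δ/2) with hε'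
        have hε'pos : 0 < ε' := lt_min hε0 (by linarith)
        obtain ⟨q, hq1, hq2⟩ := rat_dense B X hx hε'pos
        have hqz : ∀ u, X u = 0 → q u = 0 := by
          intro u hu
          have h0 := hq1 (Sum.inr u)
          have heq : ∀ u', B (Sum.inr u) u' * q u' = if u' = u then q u' else 0 := by
            intro u'
            by_cases huu : u' = u <;> simp [hB, hu, huu]
          rw [Finset.sum_congr rfl fun u' _ => heq u', Finset.sum_ite_eq' Finset.univ u q] at h0
          simpa using h0
        have hqnn : ∀ u, 0 ≤ q u := by
          intro u
          by_cases h : X u = 0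
          · rw [hqz u h]
          · have h1 := hq2 u
            have h2 := hε0le u h
            rw [abs_lt] at h1
            have h3 : ε' ≤ ε0 := min_le_left _ _
            have : (0:ℝ) < (q u : ℝ) := by linarith
            exact_mod_cast le_of_lt this
        obtain ⟨D, hD, z, hz⟩ := exists_int_scale q
        have hznn : ∀ u, 0 ≤ z u := by
          intro u
          have : (0:ℚ) ≤ (z u : ℚ) := by
            rw [hz]
            exact mul_nonneg (by positivity) (hqnn u)
          exact_mod_cast this
        set aa : Fin n → ℕ := fun i => (z (Sum.inl i)).toNat with haa
        set bb : Fin n → ℕ := fun i => (z (Sum.inr i)).toNat with hbb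
        have haal : aa ∈ vcell l := by
          intro u hu
          simp only [vsupp, Set.mem_setOf_eq, haa] at hu
          have hz0 : z (Sum.inl u) ≠ 0 := by omega
          have hq0 : q (Sum.inl u) ≠ 0 := by
            intro h
            apply hz0
            have : (z (Sum.inl u) : ℚ) = 0 := by rw [hz, h, mul_zero]
            exact_mod_cast this
          have hXu : X (Sum.inl u) ≠ 0 := fun h => hq0 (hqz _ h)
          have : c u ≠ 0 := by simpa [hX] using hXu
          by_contra hul
          exact this (hcl u hul)
        have hbbm : bb ∈ vcell m := by
          intro u hu
          simp only [vsupp, Set.mem_setOf_eq, hbb] at hu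
          have hz0 : z (Sum.inr u) ≠ 0 := by omega
          have hq0 : q (Sum.inr u) ≠ 0 := by
            intro h
            apply hz0
            have : (z (Sum.inr u) : ℚ) = 0 := by rw [hz, h, mul_zero]
            exact_mod_cast this
          have hXu : X (Sum.inr u) ≠ 0 := fun h => hq0 (hqz _ h)
          have : c' u ≠ 0 := by simpa [hX] using hXu
          by_contra hul
          exact this (hcm u hul)
        set qd : Fin n → ℚ := fun i => q (Sum.inl i) - q (Sum.inr i) with hqd
        set zd : Fin n → ℤ := fun i => z (Sum.inl i) - z (Sum.inr i) with hzd
        have hzqd : ∀ i, (zd i : ℚ) = D * qd i := by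
          intro i
          push_cast [hzd, hqd]
          rw [hz, hz]
          ring
        have hqdrow : ∀ j, ∑ i, (M j i : ℚ) * qd i = 0 := by
          intro j
          have h0 := hq1 (Sum.inl j)
          rw [Fintype.sum_sum_type] at h0
          have e1 : ∀ i : Fin n, B (Sum.inl j) (Sum.inl i) * q (Sum.inl i)
              = (M j i : ℚ) * q (Sum.inl i) := by intro i; simp [hB]
          have e2 : ∀ i : Fin n, B (Sum.inl j) (Sum.inr i) * q (Sum.inr i)
              = -((M j i : ℚ) * q (Sum.inr i)) := by intro i; simp [hB]
          rw [Finset.sum_congr rfl fun i _ => e1 i, Finset.sum_congr rfl fun i _ => e2 i] at h0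
          rw [Finset.sum_neg_distrib] at h0
          have : ∀ i, (M j i : ℚ) * qd i
              = (M j i : ℚ) * q (Sum.inl i) - (M j i : ℚ) * q (Sum.inr i) := by
            intro i; rw [hqd]; ring
          rw [Finset.sum_congr rfl fun i _ => this i, Finset.sum_sub_distrib]
          linarith
        have hAzd : M.mulVec zd = 0 := int_kernel_of_rat M qd D zd hzqd hqdrow
        have hzab : vtoZ aa - vtoZ bb = zd := by
          funext u
          simp only [Pi.sub_apply, vtoZ, haa, hbb, hzd]
          have h1 := hznn (Sum.inl u)
          have h2 := hznn (Sum.inr u)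
          omega
        have hAB : M.mulVec (vtoZ aa) = M.mulVec (vtoZ bb) := by
          have : M.mulVec (vtoZ aa - vtoZ bb) = 0 := by rw [hzab]; exact hAzd
          rw [Matrix.mulVec_sub] at this
          exact sub_eq_zero.mp this
        have hab := A_injOn_T M hmon hI (hl haal) (hm hbbm) hAB
        have hqq : q (Sum.inl i) = q (Sum.inr i) := by
          have hzz : zd i = 0 := by
            rw [← hzab, hab]
            simp
          have : (D:ℚ) * qd i = 0 := by rw [← hzqd, hzz]; simp
          have hD0 : (D : ℚ) ≠ 0 := by exact_mod_cast hD.ne'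
          have hqd0 : qd i = 0 := by
            rcases mul_eq_zero.mp this with h | h
            · exact absurd h hD0
            · exact h
          have hsub : q (Sum.inl i) - q (Sum.inr i) = 0 := hqd0
          linarith
        -- now estimate
        have e1 := hq2 (Sum.inl i)
        have e2 := hq2 (Sum.inr i)
        rw [abs_lt] at e1 e2
        simp only [hX, Sum.elim_inl, Sum.elim_inr] at e1 e2
        have hqq' : ((q (Sum.inl i) : ℝ)) = ((q (Sum.inr i) : ℝ)) := by exact_mod_cast hqq
        have h3 : ε' ≤ δ/2 := min_le_right _ _
        rw [abs_le]
        constructor <;> nlinarith [e1.1, e1.2, e2.1, e2.2]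
      have h0 : |c i - c' i| ≤ 0 := le_of_forall_pos_le_add key
      have := abs_nonneg (c i - c' i)
      have : |c i - c' i| = 0 := le_antisymm h0 this
      have := abs_eq_zero.mp this
      linarith [this]
    refine ⟨c, hc0, ?_, hxc⟩
    intro i hi
    rw [Set.mem_inter_iff] at hi
    push_neg at hi
    by_cases h : i ∈ l
    · rw [hcc]
      exact hcm i (hi h)
    · exact hcl i h
  · rintro x ⟨c, hc0, hcint, hxc⟩
    exact ⟨⟨c, hc0, fun i hi => hcint i (fun h => hi h.1), hxc⟩,
      ⟨c, hc0, fun i hi => hcint i (fun h => hi h.2), hxc⟩⟩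

section Part3

variable {n d : ℕ} (M : Matrix (Fin d) (Fin n) ℤ)

lemma Acont : Continuous (fun c : Fin n → ℝ => (M.map ((↑) : ℤ → ℝ)).mulVec c) := by
  apply continuous_pi
  intro j
  simp only [Matrix.mulVec, dotProduct]
  exact continuous_finset_sum _ fun i _ => continuous_const.mul (continuous_apply i)

lemma norm_bound
    (hker : ∀ a : Fin n → ℕ, M.mulVec (vtoZ a) = 0 → a = 0) :
    ∃ C : ℝ, 0 < C ∧ ∀ c : Fin n → ℝ, (∀ i, 0 ≤ c i) →
      ‖c‖ ≤ C * ‖(M.map ((↑) : ℤ → ℝ)).mulVec c‖ := by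
  rcases Nat.eq_zero_or_pos n with hn | hn
  · refine ⟨1, one_pos, fun c _ => ?_⟩
    subst hn
    have hc : c = 0 := funext fun i => i.elim0
    subst hc
    simp
  · haveI : Nonempty (Fin n) := ⟨⟨0, hn⟩⟩
    set A := fun c : Fin n → ℝ => (M.map ((↑) : ℤ → ℝ)).mulVec c with hA
    set K : Set (Fin n → ℝ) := {c | ∀ i, 0 ≤ c i} ∩ {c | ‖c‖ = 1} with hK
    have hKclosed : IsClosed K := by
      apply IsClosed.inter
      · have : {c : Fin n → ℝ | ∀ i, 0 ≤ c i} = ⋂ i, {c : Fin n → ℝ | 0 ≤ c i} := by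
          ext c; simp
        rw [this]
        exact isClosed_iInter fun i => isClosed_le continuous_const (continuous_apply i)
      · exact isClosed_eq continuous_norm continuous_const
    have hKbdd : Bornology.IsBounded K := by
      apply (Metric.isBounded_closedBall (x := (0 : Fin n → ℝ)) (r := 1)).subset
      intro c hc
      rw [Metric.mem_closedBall, dist_zero_right, hc.2]
    have hKcompact : IsCompact K := Metric.isCompact_of_isClosed_isBounded hKclosed hKbdd
    have hKne : K.Nonempty := by
      refine ⟨fun _ => 1, fun i => zero_le_one, ?_⟩
      show ‖(fun _ : Fin n => (1:ℝ))‖ = 1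
      rw [pi_norm_const (1:ℝ)]
      exact norm_one
    obtain ⟨u, huK, humin⟩ := hKcompact.exists_isMinOn hKne ((Acont M).norm.continuousOn)
    set m := ‖A u‖ with hm
    have hm0 : 0 < m := by
      rcases lt_or_eq_of_le (norm_nonneg (A u)) with h | h
      · exact h
      · exfalso
        have hAu : A u = 0 := norm_eq_zero.mp h.symm
        have := real_pointed M hker u huK.1 hAu
        rw [this] at huK
        have h2 := huK.2
        simp at h2
    refine ⟨m⁻¹, inv_pos.mpr hm0, fun c hc => ?_⟩
    by_cases hc0 : c = 0
    · subst hc0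
      simp only [norm_zero]
      positivity
    · set t := ‖c‖ with ht
      have ht0 : 0 < t := norm_pos_iff.mpr hc0
      set u' := t⁻¹ • c with hu'
      have hu'K : u' ∈ K := by
        constructor
        · intro i
          have : u' i = t⁻¹ * c i := rfl
          rw [this]
          exact mul_nonneg (by positivity) (hc i)
        · show ‖u'‖ = 1
          rw [hu', norm_smul, Real.norm_eq_abs, abs_of_pos (by positivity), ← ht]
          field_simp
      have hminu := humin hu'K
      have hAu' : A u' = t⁻¹ • A c := by
        rw [hu', hA]
        exact Matrix.mulVec_smul _ _ _
      have h1 : m ≤ ‖A u'‖ := hminu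
      rw [hAu', norm_smul, Real.norm_eq_abs, abs_of_pos (by positivity)] at h1
      -- m ≤ t⁻¹ * ‖A c‖
      show t ≤ m⁻¹ * ‖A c‖
      calc t = m⁻¹ * (m * t) := by field_simp
      _ ≤ m⁻¹ * ‖A c‖ := by
          apply mul_le_mul_of_nonneg_left _ (le_of_lt (inv_pos.mpr hm0))
          calc m * t ≤ (t⁻¹ * ‖A c‖) * t := mul_le_mul_of_nonneg_right h1 (le_of_lt ht0)
          _ = ‖A c‖ := by field_simp
end Part3

lemma vslice_zero {n : ℕ} (l : Set (Fin n)) : vslice 0 l = vcell l := by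
  ext a
  constructor
  · rintro ⟨b, hb, rfl⟩
    simpa using hb
  · intro ha
    exact ⟨a, ha, by simp⟩

lemma subset_of_vcell_subset {n : ℕ} {l l' : Set (Fin n)} (h : vcell l ⊆ vcell l') :
    l ⊆ l' := by
  classical
  intro i hi
  set e : Fin n → ℕ := fun j => if j = i then 1 else 0 with he
  have hel : e ∈ vcell l := by
    intro j hj
    simp only [vsupp, Set.mem_setOf_eq, he] at hj
    by_cases hji : j = i
    · rw [hji]; exact hi
    · simp [hji] at hj
  have := h hel
  apply this
  simp [vsupp, he]

lemma part3cover {n d : ℕ} (M : Matrix (Fin d) (Fin n) ℤ) (T : Set (Fin n → ℕ))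
    (hTd : DownClosed T)
    (hrep : ∀ a : Fin n → ℕ, ∃ b ∈ T, M.mulVec (vtoZ b) = M.mulVec (vtoZ a))
    (hker : ∀ a : Fin n → ℕ, M.mulVec (vtoZ a) = 0 → a = 0)
    (x : Fin d → ℝ) (hx : x ∈ realCone M Set.univ) :
    ∃ l : Set (Fin n), IsStdPair T 0 l ∧ x ∈ realCone M l := by
  classical
  obtain ⟨c0, hc00, -, hxc0⟩ := hx
  set A := fun c : Fin n → ℝ => (M.map ((↑) : ℤ → ℝ)).mulVec c with hA
  have hAcoord : ∀ (v : Fin n → ℝ) j, A v j = ∑ i, (M j i : ℝ) * v i := by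
    intro v j
    show ((M.map ((↑) : ℤ → ℝ)).mulVec v) j = ∑ i, (M j i : ℝ) * v i
    rw [Matrix.mulVec, dotProduct]
    refine Finset.sum_congr rfl fun i _ => ?_
    rw [Matrix.map_apply]
  have hcast : ∀ (w : Fin n → ℕ) j, ((M.mulVec (vtoZ w) j : ℤ) : ℝ) = ∑ i, (M j i : ℝ) * (w i : ℝ) := by
    intro w j
    simp only [Matrix.mulVec, dotProduct, vtoZ]
    push_cast
    rfl
  set afun : ℕ → Fin n → ℕ := fun k i => ⌊((k:ℝ)+1) * c0 i⌋₊ with hafun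
  have hbex : ∀ k : ℕ, ∃ bk ∈ T, M.mulVec (vtoZ bk) = M.mulVec (vtoZ (afun k)) :=
    fun k => hrep (afun k)
  choose bfun hbT hbA using hbex
  set dseq : ℕ → Fin n → ℝ := fun k => (((k:ℝ)+1))⁻¹ • (fun i => (bfun k i : ℝ)) with hdseq
  have hdnn : ∀ k i, 0 ≤ dseq k i := by
    intro k i
    have : dseq k i = (((k:ℝ)+1))⁻¹ * (bfun k i : ℝ) := rfl
    rw [this]
    positivity
  set R : ℝ := ∑ j, ∑ i, |(M j i : ℝ)| with hR
  have hR0 : 0 ≤ R :=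
    Finset.sum_nonneg fun j _ => Finset.sum_nonneg fun i _ => abs_nonneg _
  have hfloor : ∀ k i, |((afun k i : ℝ)) - ((k:ℝ)+1) * c0 i| ≤ 1 := by
    intro k i
    have hnn : 0 ≤ ((k:ℝ)+1) * c0 i := mul_nonneg (by positivity) (hc00 i)
    have h1 : ((afun k i : ℝ)) ≤ ((k:ℝ)+1) * c0 i := Nat.floor_le hnn
    have h2 : ((k:ℝ)+1) * c0 i < (afun k i : ℝ) + 1 := Nat.lt_floor_add_one _
    rw [abs_le]
    constructor <;> linarith
  have hkey : ∀ k j, |A (dseq k) j - x j| ≤ R / ((k:ℝ)+1) := by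
    intro k j
    have hκ : (0:ℝ) < (k:ℝ)+1 := by positivity
    have hAd : A (dseq k) j = (((k:ℝ)+1))⁻¹ * ∑ i, (M j i:ℝ) * (bfun k i : ℝ) := by
      rw [hA]
      show ((M.map ((↑) : ℤ → ℝ)).mulVec ((((k:ℝ)+1))⁻¹ • (fun i => (bfun k i : ℝ)))) j = _
      rw [Matrix.mulVec_smul]
      rw [Pi.smul_apply, smul_eq_mul]
      congr 1
    have hAb : ∑ i, (M j i:ℝ) * (bfun k i : ℝ) = ∑ i, (M j i:ℝ) * (afun k i : ℝ) := by
      rw [← hcast, ← hcast, hbA k]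
    have hxj : x j = ∑ i, (M j i:ℝ) * c0 i := by rw [hxc0]; exact hAcoord c0 j
    rw [hAd, hAb, hxj]
    have hsplit : ∑ i, (M j i:ℝ) * ((afun k i:ℝ) - ((k:ℝ)+1) * c0 i)
        = (∑ i, (M j i:ℝ) * (afun k i:ℝ)) - ((k:ℝ)+1) * ∑ i, (M j i:ℝ) * c0 i := by
      rw [Finset.mul_sum, ← Finset.sum_sub_distrib]
      refine Finset.sum_congr rfl fun i _ => by ring
    have hre : (((k:ℝ)+1))⁻¹ * (∑ i, (M j i:ℝ) * (afun k i:ℝ)) - ∑ i, (M j i:ℝ) * c0 i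
        = (((k:ℝ)+1))⁻¹ * ∑ i, (M j i:ℝ) * ((afun k i:ℝ) - ((k:ℝ)+1) * c0 i) := by
      rw [hsplit, mul_sub, inv_mul_cancel_left₀ (ne_of_gt hκ)]
    rw [hre, abs_mul, abs_of_pos (inv_pos.mpr hκ), div_eq_inv_mul]
    apply mul_le_mul_of_nonneg_left _ (le_of_lt (inv_pos.mpr hκ))
    calc |∑ i, (M j i:ℝ) * ((afun k i:ℝ) - ((k:ℝ)+1) * c0 i)|
        ≤ ∑ i, |(M j i:ℝ) * ((afun k i:ℝ) - ((k:ℝ)+1) * c0 i)| := Finset.abs_sum_le_sum_abs _ _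
      _ ≤ ∑ i, |(M j i:ℝ)| := by
          refine Finset.sum_le_sum fun i _ => ?_
          rw [abs_mul]
          calc |(M j i:ℝ)| * |(afun k i:ℝ) - ((k:ℝ)+1) * c0 i|
              ≤ |(M j i:ℝ)| * 1 := mul_le_mul_of_nonneg_left (hfloor k i) (abs_nonneg _)
            _ = |(M j i:ℝ)| := mul_one _
      _ ≤ R := by
          rw [hR]
          exact Finset.single_le_sum (f := fun j' => ∑ i, |(M j' i : ℝ)|)
            (fun j' _ => Finset.sum_nonneg fun i _ => abs_nonneg _) (Finset.mem_univ j)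
  have hnormdiff : ∀ k, ‖A (dseq k) - x‖ ≤ R / ((k:ℝ)+1) := by
    intro k
    have hκ : (0:ℝ) < (k:ℝ)+1 := by positivity
    rw [pi_norm_le_iff_of_nonneg (div_nonneg hR0 (le_of_lt hκ))]
    intro j
    rw [Pi.sub_apply, Real.norm_eq_abs]
    exact hkey k j
  obtain ⟨C, hC0, hC⟩ := norm_bound M hker
  have hball : ∀ k, dseq k ∈ Metric.closedBall (0 : Fin n → ℝ) (C * (‖x‖ + R)) := by
    intro k
    rw [Metric.mem_closedBall, dist_zero_right]
    have hκ : (0:ℝ) < (k:ℝ)+1 := by positivity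
    have h1 : ‖A (dseq k)‖ ≤ ‖x‖ + R := by
      have heq : x + (A (dseq k) - x) = A (dseq k) := by abel
      calc ‖A (dseq k)‖ = ‖x + (A (dseq k) - x)‖ := by rw [heq]
        _ ≤ ‖x‖ + ‖A (dseq k) - x‖ := norm_add_le _ _
        _ ≤ ‖x‖ + R := by
            have h2 : R / ((k:ℝ)+1) ≤ R := by
              apply div_le_self hR0
              linarith
            linarith [hnormdiff k]
    calc ‖dseq k‖ ≤ C * ‖A (dseq k)‖ := hC (dseq k) (hdnn k)
      _ ≤ C * (‖x‖ + R) := mul_le_mul_of_nonneg_left h1 (le_of_lt hC0)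
  obtain ⟨cstar, -, φ, hφ, hconv⟩ :=
    tendsto_subseq_of_bounded Metric.isBounded_closedBall hball
  have hgtend : Tendsto (fun k : ℕ => R / ((k:ℝ)+1)) atTop (𝓝 0) := by
    have h := tendsto_one_div_add_atTop_nhds_zero_nat.const_mul R
    simpa [mul_one_div, div_eq_mul_inv] using h
  have hAtend : Tendsto (fun k => A (dseq k)) atTop (𝓝 x) := by
    rw [← tendsto_sub_nhds_zero_iff]
    exact squeeze_zero_norm hnormdiff hgtend
  have hlim : A cstar = x := by
    have h1 : Tendsto (fun k => A (dseq (φ k))) atTop (𝓝 (A cstar)) :=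
      ((Acont M).tendsto cstar).comp hconv
    have h2 : Tendsto (fun k => A (dseq (φ k))) atTop (𝓝 x) :=
      hAtend.comp hφ.tendsto_atTop
    exact tendsto_nhds_unique h1 h2
  have hcs : ∀ i, 0 ≤ cstar i := by
    intro i
    exact ge_of_tendsto' (((continuous_apply i).tendsto cstar).comp hconv)
      (fun k => hdnn (φ k) i)
  set s : Set (Fin n) := {i | cstar i ≠ 0} with hs
  have hscell : vcell s ⊆ T := by
    intro v hv
    have hev : ∀ i, ∀ᶠ k in atTop, v i ≤ bfun (φ k) i := by
      intro i
      by_cases hvi : v i = 0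
      · exact Filter.Eventually.of_forall (fun k => hvi ▸ Nat.zero_le _)
      · have his : i ∈ s := hv hvi
        have hpos : 0 < cstar i := lt_of_le_of_ne (hcs i) (Ne.symm his)
        have hconvi : Tendsto (fun k => dseq (φ k) i) atTop (𝓝 (cstar i)) :=
          ((continuous_apply i).tendsto cstar).comp hconv
        have h1 : ∀ᶠ k in atTop, cstar i / 2 < dseq (φ k) i :=
          hconvi.eventually (eventually_gt_nhds (by linarith))
        obtain ⟨K0, hK0⟩ := exists_nat_ge ((v i : ℝ) / (cstar i / 2))
        filter_upwards [h1, eventually_ge_atTop K0] with k hk1 hk2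
        have hκ : (0:ℝ) < (φ k:ℝ)+1 := by positivity
        have hφk : (K0:ℝ) ≤ (φ k : ℝ) + 1 := by
          have hkk : K0 ≤ φ k := le_trans hk2 hφ.le_apply
          have : (K0:ℝ) ≤ (φ k:ℝ) := by exact_mod_cast hkk
          linarith
        have hvle : (v i : ℝ) ≤ (K0:ℝ) * (cstar i / 2) := by
          rw [div_le_iff₀ (by linarith)] at hK0
          linarith
        have hb : dseq (φ k) i = (((φ k:ℝ)+1))⁻¹ * (bfun (φ k) i : ℝ) := rfl
        have hbig : ((φ k:ℝ)+1) * (cstar i / 2) < (bfun (φ k) i : ℝ) := by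
          rw [hb] at hk1
          have := (mul_lt_mul_iff_right₀ hκ).mpr hk1
          calc ((φ k:ℝ)+1) * (cstar i / 2) < ((φ k:ℝ)+1) * ((((φ k:ℝ)+1))⁻¹ * (bfun (φ k) i : ℝ)) := this
            _ = (bfun (φ k) i : ℝ) := by field_simp
        have hfinal : (v i:ℝ) < (bfun (φ k) i : ℝ) := by
          have h2 : (K0:ℝ) * (cstar i/2) ≤ ((φ k:ℝ)+1) * (cstar i/2) :=
            mul_le_mul_of_nonneg_right hφk (by linarith)
          linarith
        exact_mod_cast hfinal.le
    obtain ⟨k, hk⟩ := (Filter.eventually_all.mpr hev).exists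
    exact hTd (bfun (φ k)) v hk (hbT (φ k))
  -- maximal cell containing s
  set S₀ : Set (Set (Fin n)) := {l' | s ⊆ l' ∧ vcell l' ⊆ T} with hS₀
  obtain ⟨l, hlS, hmax⟩ :=
    Set.Finite.exists_maximalFor id S₀ (Set.toFinite _) ⟨s, subset_rfl, hscell⟩
  refine ⟨l, ⟨?_, ?_, ?_⟩, ?_⟩
  · have hys : vsupp (0 : Fin n → ℕ) = ∅ := by
      ext i; simp [vsupp]
    rw [hys]
    exact Set.disjoint_left.mpr (fun a ha => absurd ha (Set.notMem_empty a))
  · rw [vslice_zero]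
    exact hlS.2
  · intro r' l' hdisj hT' hsub
    have h0mem : (0 : Fin n → ℕ) ∈ vslice 0 l := by
      rw [vslice_zero]
      intro i hi
      simp [vsupp] at hi
    obtain ⟨w, hw, hrw⟩ := hsub h0mem
    have hr'0 : r' = 0 := by
      funext i
      have := congrFun hrw i
      simp only [Pi.add_apply, Pi.zero_apply] at this ⊢
      omega
    subst hr'0
    rw [vslice_zero l, vslice_zero l'] at hsub
    rw [vslice_zero l'] at hT'
    rw [vslice_zero l, vslice_zero l']
    have hll' : l ⊆ l' := subset_of_vcell_subset hsub
    have hl'S : l' ∈ S₀ := ⟨hlS.1.trans hll', hT'⟩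
    have heq : id l = id l' := le_antisymm hll' (hmax hl'S hll')
    simp only [id] at heq
    rw [heq]
  · refine ⟨cstar, hcs, ?_, hlim.symm⟩
    intro i hi
    have his : i ∉ s := fun h => hi (hlS.1 h)
    simpa [hs] using his

/-- For a monomial A-graded ideal, the cones A(ℝ_{≥0}^ℓ) with
ℤ_{≥0}^ℓ ⊆ T form a triangulation of A(ℝ_{≥0}^n): the generating vectors of every
cell are linearly independent, two cells intersect in the common face, and the
cells with (0, ℓ) ∈ B(T) cover A(ℝ_{≥0}^n). -/
theorem stmt_12 {n d : ℕ} (M : Matrix (Fin d) (Fin n) ℤ)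
    (hker : ∀ a : Fin n → ℕ, M.mulVec (vtoZ a) = 0 → a = 0)
    (I : Ideal (MvPolynomial (Fin n) ℂ)) (hmon : IsMonomialIdeal I)
    (hI : IsAGraded M I) :
    (∀ l : Set (Fin n), vcell l ⊆ TofI I →
      LinearIndependent ℝ (fun i : l => fun j : Fin d => (M j i : ℝ))) ∧
    (∀ l m : Set (Fin n), vcell l ⊆ TofI I → vcell m ⊆ TofI I →
      realCone M l ∩ realCone M m = realCone M (l ∩ m)) ∧
    (⋃ l ∈ {l : Set (Fin n) | IsStdPair (TofI I) 0 l}, realCone M l) =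
      realCone M Set.univ := by
  refine ⟨fun l hl => part1 M hmon hI l hl, fun l m hl hm => part2 M hmon hI l m hl hm, ?_⟩
  apply Set.Subset.antisymm
  · refine Set.iUnion₂_subset ?_
    rintro l hlstd x ⟨c, hc0, hcl, hxc⟩
    exact ⟨c, hc0, fun i hi => absurd (Set.mem_univ i) hi, hxc⟩
  · intro x hx
    obtain ⟨l, hstd, hxl⟩ := part3cover M (TofI I) (TofI_downClosed hmon)
      (fun a => exists_T_rep M hmon hI a) hker x hx
    exact Set.mem_iUnion₂.mpr ⟨l, hstd, hxl⟩
end
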